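/- For every α ∈ ℂ one has the identity of polynomials S_α⁰ 1 = 2α (α − α_{1,2})(α − α_{2,1}) φ₂ in R, where 1 denotes the constant polynomial 1. -/

import Mathlib

open MvPolynomial

noncomputable section

/-- The polynomial ring `ℂ[(φ_n)_{n ≥ 1}]`, with `n ↦ φ_n`. -/
abbrev BFockRing : Type := MvPolynomial ℕ ℂ

/-- Heisenberg operators `A_n` (boundary version). -/
def Aop : ℤ → BFockRing → BFockRing := fun n p =>
  if 0 < n then (Complex.I / 2) • pderiv n.toNat p
  else if n < 0 then
    (Complex.I / 2) •
      (pderiv (-n).toNat p - ((2 * (-n) : ℤ) : ℂ) • (X (-n).toNat * p))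
  else 0

/-- Sugawara operator `L_{-n}^{0,α}` for `n ≥ 1`. -/
def Lop (γ : ℝ) (α : ℂ) (n : ℕ) (p : BFockRing) : BFockRing :=
  (Complex.I * (α + ((n : ℂ) - 1) * ((γ : ℂ) / 2 + 2 / (γ : ℂ)))) • Aop (-(n : ℤ)) p +
    ∑ᶠ m ∈ {m : ℤ | m ≠ 0 ∧ m ≠ -(n : ℤ)}, Aop (-(n : ℤ) - m) (Aop m p)

/-- `S_α⁰ = α² L_{-2}^{0,α} + (L_{-1}^{0,α})²`. -/
def Sop (γ : ℝ) (α : ℂ) (p : BFockRing) : BFockRing :=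
  α ^ 2 • Lop γ α 2 p + Lop γ α 1 (Lop γ α 1 p)

end

/-! For `m > 0` the operator `A_m` is `(i/2) ∂_{φ_m}`, so on a polynomial in finitely many
variables only finitely many modes of the Sugawara sum act, and on `1` and `α φ₁` they can be
listed explicitly. One finds `L_{-1} 1 = α φ₁`, `L_{-2} 1 = 2(α + Q) φ₂ + 1/2 - φ₁²` and
`L_{-1} (α φ₁) = -α²/2 + α² φ₁² + 2α φ₂`; in `S_α⁰ 1` the constant and `φ₁²` terms cancel, and the
coefficient of `φ₂` is `2α(α² + Qα + 1) = 2α(α + 2/γ)(α + γ/2)`. -/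

theorem MvPolynomial.pderiv_pderiv_comm {R σ : Type*} [CommSemiring R] (i j : σ)
    (p : MvPolynomial σ R) : pderiv i (pderiv j p) = pderiv j (pderiv i p) := by
  classical
  induction p using MvPolynomial.induction_on with
  | C a => simp
  | add p q hp hq => simp [hp, hq]
  | mul_X p k hp =>
    simp only [Derivation.leibniz, map_add, smul_eq_mul, pderiv_X, hp, Pi.single_apply]
    split_ifs <;> simp [add_comm, add_left_comm]

lemma Aop_zero : Aop 0 = 0 := by
  funext p; simp [Aop]

lemma Aop_apply_zero (n : ℤ) : Aop n 0 = 0 := by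
  unfold Aop; split_ifs <;> simp

lemma Aop_natCast {k : ℕ} (hk : 0 < k) (p : BFockRing) :
    Aop k p = (Complex.I / 2) • pderiv k p := by
  simp [Aop, hk]

lemma Aop_neg_natCast {k : ℕ} (hk : 0 < k) (p : BFockRing) :
    Aop (-k) p = (Complex.I / 2) • (pderiv k p - (2 * k : ℂ) • (X k * p)) := by
  simp [Aop, hk]

/-- The modes `m` for which `A_{-n-m} A_m` can act nontrivially on a polynomial in the variables
`φ_j`, `j ∈ s`. -/
def sugawaraSupport (n : ℕ) (s : Finset ℕ) : Finset ℤ :=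
  s.image Nat.cast ∪ (Finset.Ioo 0 n ∪ s.image (n + ·)).image fun k : ℕ => -(k : ℤ)

lemma Aop_Aop_eq_zero_of_notMem_sugawaraSupport {n : ℕ} (hn : 0 < n) {p : BFockRing}
    {s : Finset ℕ} (hp : ∀ j ∉ s, pderiv j p = 0) {m : ℤ} (hm : m ∉ sugawaraSupport n s) :
    Aop (-n - m) (Aop m p) = 0 := by
  simp only [sugawaraSupport, Finset.mem_union, Finset.mem_image, Finset.mem_Ioo, not_or,
    not_exists, not_and] at hm
  obtain ⟨hpos, hneg⟩ := hm
  rcases eq_or_ne m 0 with rfl | hm0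
  · simp [Aop_zero, Aop_apply_zero]
  obtain ⟨k, rfl | rfl⟩ := m.eq_nat_or_neg
  · rw [Aop_natCast (by omega), hp k fun h => hpos k h rfl, smul_zero, Aop_apply_zero]
  · rcases lt_trichotomy k n with hkn | rfl | hnk
    · exact absurd rfl (hneg k (.inl ⟨by omega, hkn⟩))
    · simp [Aop_zero]
    · obtain ⟨j, rfl⟩ := Nat.exists_eq_add_of_lt hnk
      have hjs : j + 1 ∉ s := fun h => hneg _ (.inr ⟨j + 1, h, by omega⟩) rfl
      rw [show -(n : ℤ) - -((n + j + 1 : ℕ) : ℤ) = ((j + 1 : ℕ) : ℤ) by push_cast; ring,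
        Aop_natCast j.succ_pos, Aop_neg_natCast (by omega)]
      simp [pderiv_pderiv_comm (j + 1), hp _ hjs, pderiv_X_of_ne (show n + j + 1 ≠ j + 1 by omega)]

lemma Lop_eq_add_sum_sugawaraSupport (γ : ℝ) (α : ℂ) {n : ℕ} (hn : 0 < n) {p : BFockRing}
    {s : Finset ℕ} (hp : ∀ j ∉ s, pderiv j p = 0) :
    Lop γ α n p = (Complex.I * (α + ((n : ℂ) - 1) * ((γ : ℂ) / 2 + 2 / (γ : ℂ)))) • Aop (-n) p +
      ∑ m ∈ sugawaraSupport n s, Aop (-n - m) (Aop m p) := by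
  rw [Lop, finsum_mem_eq_sum_of_inter_support_eq]
  ext m
  simp only [Set.mem_inter_iff, Set.mem_ofPred_eq, Function.mem_support, Finset.mem_coe]
  refine and_congr_left fun hm => ⟨fun _ => ?_, fun _ => ⟨?_, ?_⟩⟩
  · by_contra h
    exact hm (Aop_Aop_eq_zero_of_notMem_sugawaraSupport hn hp h)
  · rintro rfl
    simp [Aop_zero, Aop_apply_zero] at hm
  · rintro rfl
    simp [Aop_zero] at hm

lemma Lop_one_one (γ : ℝ) (α : ℂ) : Lop γ α 1 1 = α • X 1 := by
  rw [Lop_eq_add_sum_sugawaraSupport γ α one_pos (s := ∅) fun _ _ => pderiv_one,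
    show sugawaraSupport 1 ∅ = ∅ from rfl, Finset.sum_empty, add_zero]
  simp [Aop, smul_smul]
  match_scalars
  linear_combination (-α) * Complex.I_mul_I

lemma Lop_two_one (γ : ℝ) (α : ℂ) :
    Lop γ α 2 1 = (2 * (α + ((γ : ℂ) / 2 + 2 / (γ : ℂ)))) • X 2 + (1 / 2 : ℂ) • 1 - X 1 * X 1 := by
  rw [Lop_eq_add_sum_sugawaraSupport γ α two_pos (s := ∅) fun _ _ => pderiv_one,
    show sugawaraSupport 2 ∅ = {-1} from rfl, Finset.sum_singleton]
  simp [Aop, smul_smul]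
  match_scalars <;> ring_nf <;> simp only [Complex.I_sq] <;> ring

lemma Lop_one_smul_X_one (γ : ℝ) (α : ℂ) :
    Lop γ α 1 (α • X 1) = (-(α ^ 2 / 2)) • 1 + α ^ 2 • (X 1 * X 1) + (2 * α) • X 2 := by
  rw [Lop_eq_add_sum_sugawaraSupport γ α one_pos (s := {1}) fun j hj => by
      rw [Derivation.map_smul, pderiv_X_of_ne (Ne.symm (Finset.notMem_singleton.1 hj)), smul_zero],
    show sugawaraSupport 1 {1} = {1, -2} from rfl, Finset.sum_pair (by norm_num)]
  simp [Aop, smul_smul]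
  match_scalars <;> ring_nf <;> simp only [Complex.I_sq] <;> ring

theorem stmt14_general (γ : ℝ) (hγ0 : 0 < γ) (α : ℂ) :
    Sop γ α 1 =
      C (2 * α * (α - (-2 / (γ : ℂ))) * (α - (-(γ : ℂ) / 2))) * X 2 := by
  have hγ : (γ : ℂ) ≠ 0 := Complex.ofReal_ne_zero.mpr hγ0.ne'
  rw [Sop, Lop_two_one, Lop_one_one, Lop_one_smul_X_one, ← smul_eq_C_mul]
  match_scalars
  · field_simp
    ring
  all_goals ring

theorem stmt14 (γ : ℝ) (hγ0 : 0 < γ) (hγ2 : γ < 2) (α : ℂ) :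
    Sop γ α 1 =
      C (2 * α * (α - (-2 / (γ : ℂ))) * (α - (-(γ : ℂ) / 2))) * X 2 :=
  stmt14_general γ hγ0 α
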